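/- Vanishing at infinity of graph product multipliers: let Γ = (V,E) be a finite simplicial graph and for each v let h_v : G_v → Z(A) be unital with ‖h_v(s)‖ ≤ 1/2 for all s ∈ G_v \ {e}, and h_v ∈ C₀(G_v, A). Then the graph product h = ⋆_Γ h_v satisfies: for every ε > 0 the set {s ∈ ⋆_Γ G_v : ‖h(s)‖ ≥ ε} is finite. -/

import Mathlib

open scoped Matrix

/-- Positivity of a matrix over a C*-algebra: `M = Bᴴ * B` for some `B`. -/
def MatPos {n : ℕ} {A : Type*} [Ring A] [StarRing A]
    (M : Matrix (Fin n) (Fin n) A) : Prop :=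
  ∃ B : Matrix (Fin n) (Fin n) A, M = Bᴴ * B

/-- A positive definite multiplier for an action `α : G →* Aut(A)`. -/
def IsPDMultiplier {G : Type*} [Group G] {A : Type*} [CStarAlgebra A]
    (α : G →* (A ≃ₐ[ℂ] A)) (h : G → A) : Prop :=
  (∀ s : G, h s ∈ Set.center A) ∧
  ∀ (n : ℕ) (x : Fin n → G),
    MatPos (Matrix.of fun i j => α (x j) (h ((x i)⁻¹ * x j)))

/-- The commutators defining the graph product of groups. -/
def graphRels {V : Type*} (E : V → V → Prop) (G : V → Type*) [∀ v, Group (G v)] :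
    Set (Monoid.CoprodI G) :=
  {x | ∃ (v w : V) (_ : E v w) (g : G v) (k : G w),
    x = Monoid.CoprodI.of g * Monoid.CoprodI.of k *
      (Monoid.CoprodI.of g)⁻¹ * (Monoid.CoprodI.of k)⁻¹}

/-- The graph product of the groups `G v` over the graph `(V, E)`: the free
product modulo commutation of adjacent vertex groups. -/
def GraphProduct {V : Type*} (E : V → V → Prop) (G : V → Type*)
    [∀ v, Group (G v)] : Type _ :=
  Monoid.CoprodI G ⧸ Subgroup.normalClosure (graphRels E G)

instance {V : Type*} (E : V → V → Prop) (G : V → Type*) [∀ v, Group (G v)] :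
    Group (GraphProduct E G) :=
  QuotientGroup.Quotient.group _

/-- The canonical map of a vertex group into the graph product. -/
def GraphProduct.of {V : Type*} (E : V → V → Prop) {G : V → Type*}
    [∀ v, Group (G v)] {v : V} (g : G v) : GraphProduct E G :=
  QuotientGroup.mk (Monoid.CoprodI.of g)

/-- The element of the graph product given by a word of vertex-group letters. -/
def wordProd {V : Type*} (E : V → V → Prop) {G : V → Type*} [∀ v, Group (G v)]
    (l : List (Σ v, G v)) : GraphProduct E G :=
  (l.map fun p => GraphProduct.of E p.2).prod

/-- A vertex word is reduced if whenever two letters agree, some letter strictly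
between them is not joined to them by an edge. -/
def VReduced {V : Type*} (E : V → V → Prop) (l : List V) : Prop :=
  ∀ k m : Fin l.length, (k : ℕ) < m → l.get k = l.get m →
    ∃ p : Fin l.length, (k : ℕ) < p ∧ (p : ℕ) < m ∧ ¬ E (l.get k) (l.get p)

/-- A word of vertex-group letters is reduced if all letters are nontrivial and
its underlying vertex word is reduced. -/
def GReduced {V : Type*} (E : V → V → Prop) {G : V → Type*} [∀ v, Group (G v)]
    (l : List (Σ v, G v)) : Prop :=
  (∀ p ∈ l, p.2 ≠ 1) ∧ VReduced E (l.map Sigma.fst)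

/-- The value of the graph product multiplier `⋆_Γ h_v` on a reduced word
`s₁ ⋯ sₙ`: the ordered product `∏_j α((s_{j+1}⋯sₙ)⁻¹)(h_{v_j}(s_j))`. -/
def hWord {V : Type*} (E : V → V → Prop) {G : V → Type*} [∀ v, Group (G v)]
    {A : Type*} [CStarAlgebra A]
    (α : GraphProduct E G →* (A ≃ₐ[ℂ] A)) (hv : ∀ v, G v → A) :
    List (Σ v, G v) → A
  | [] => 1
  | p :: l => α ((wordProd E l)⁻¹) (hv p.1 p.2) * hWord E α hv l
section Aux
variable {V : Type*} (E : V → V → Prop) {G : V → Type*} [∀ v, Group (G v)]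

lemma GraphProduct.of_mul {v : V} (g g' : G v) :
    GraphProduct.of E (g * g') = GraphProduct.of E g * GraphProduct.of E g' := by
  simp [GraphProduct.of, map_mul]
  rfl

lemma GraphProduct.of_one {v : V} : GraphProduct.of E (1 : G v) = 1 := by
  simp [GraphProduct.of]
  rfl

lemma GraphProduct.of_comm {v w : V} (hE : E v w) (g : G v) (k : G w) :
    GraphProduct.of E g * GraphProduct.of E k = GraphProduct.of E k * GraphProduct.of E g := by
  have hm : Monoid.CoprodI.of g * Monoid.CoprodI.of k * (Monoid.CoprodI.of g)⁻¹ *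
      (Monoid.CoprodI.of k)⁻¹ ∈ Subgroup.normalClosure (graphRels E G) :=
    Subgroup.subset_normalClosure ⟨v, w, hE, g, k, rfl⟩
  have h1 : (QuotientGroup.mk (Monoid.CoprodI.of g * Monoid.CoprodI.of k *
      (Monoid.CoprodI.of g)⁻¹ * (Monoid.CoprodI.of k)⁻¹) :
      GraphProduct E G) = 1 := (QuotientGroup.eq_one_iff _).2 hm
  rw [QuotientGroup.mk_mul, QuotientGroup.mk_mul, QuotientGroup.mk_mul] at h1
  have h2 : @Bracket.bracket _ _ commutatorElement (GraphProduct.of E g) (GraphProduct.of E k) = 1 := by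
    rw [commutatorElement_def]
    exact h1
  exact commutatorElement_eq_one_iff_mul_comm.1 h2

lemma wordProd_nil : wordProd E ([] : List (Σ v, G v)) = 1 := rfl

lemma wordProd_cons (p : Σ v, G v) (l : List (Σ v, G v)) :
    wordProd E (p :: l) = GraphProduct.of E p.2 * wordProd E l := by
  simp [wordProd]

lemma wordProd_append (l₁ l₂ : List (Σ v, G v)) :
    wordProd E (l₁ ++ l₂) = wordProd E l₁ * wordProd E l₂ := by
  simp [wordProd]

end Aux
section Aux2
variable {V : Type*} (E : V → V → Prop) {G : V → Type*} [∀ v, Group (G v)]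

lemma wordProd_comm (hsymm : Symmetric E) {v : V} (g : G v) (l : List (Σ v, G v))
    (hl : ∀ p ∈ l, E v p.1) :
    wordProd E l * GraphProduct.of E g = GraphProduct.of E g * wordProd E l := by
  induction l with
  | nil => simp [wordProd_nil]
  | cons p l ih =>
    rw [wordProd_cons, mul_assoc, ih (fun q hq => hl q (List.mem_cons_of_mem _ hq)),
      ← mul_assoc, GraphProduct.of_comm E (hsymm (hl p List.mem_cons_self)) p.2 g,
      mul_assoc]

lemma wordProd_reduce (hsymm : Symmetric E) {v : V} (g g' : G v)
    (l₁ l₂ l₃ : List (Σ v, G v)) (hl₂ : ∀ p ∈ l₂, E v p.1) :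
    wordProd E (l₁ ++ ⟨v, g⟩ :: (l₂ ++ ⟨v, g'⟩ :: l₃)) =
      wordProd E (l₁ ++ ⟨v, g * g'⟩ :: (l₂ ++ l₃)) := by
  rw [wordProd_append, wordProd_append, wordProd_cons, wordProd_cons,
    wordProd_append, wordProd_append, wordProd_cons]
  have h1 : wordProd E l₂ * (GraphProduct.of E g' * wordProd E l₃) =
      GraphProduct.of E g' * (wordProd E l₂ * wordProd E l₃) := by
    rw [← mul_assoc, wordProd_comm E hsymm g' l₂ hl₂, mul_assoc]
  rw [h1]
  simp only [GraphProduct.of_mul]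
  group

end Aux2
section Aux3
variable {V : Type*} (E : V → V → Prop) {G : V → Type*} [∀ v, Group (G v)]

lemma exists_decomp (l : List (Σ v, G v)) (hnr : ¬ VReduced E (l.map Sigma.fst)) :
    ∃ (v : V) (g g' : G v) (l₁ l₂ l₃ : List (Σ v, G v)),
      l = l₁ ++ ⟨v, g⟩ :: (l₂ ++ ⟨v, g'⟩ :: l₃) ∧ ∀ p ∈ l₂, E v p.1 := by
  unfold VReduced at hnr
  push_neg at hnr
  obtain ⟨k, m, hkm, heq, hE⟩ := hnr
  have hlen : (l.map Sigma.fst).length = l.length := List.length_map _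
  have hm' := m.2
  have hk : (k : ℕ) < l.length := by omega
  have hm : (m : ℕ) < l.length := by omega
  have hgk : (l.map Sigma.fst).get k = (l[(k : ℕ)]'hk).1 := by
    simp [List.get_eq_getElem]
  have hgm : (l.map Sigma.fst).get m = (l[(m : ℕ)]'hm).1 := by
    simp [List.get_eq_getElem]
  rcases hK : l[(k : ℕ)]'hk with ⟨v1, g⟩
  rcases hM : l[(m : ℕ)]'hm with ⟨v2, g'⟩
  have hv : v1 = v2 := by
    have := heq
    rw [hgk, hgm, hK, hM] at this
    exact this
  subst hv
  refine ⟨v1, g, g', l.take (k : ℕ), (l.drop ((k : ℕ)+1)).take ((m : ℕ)-(k : ℕ)-1),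
    l.drop ((m : ℕ)+1), ?_, ?_⟩
  · conv_lhs => rw [← List.take_append_drop (k : ℕ) l]
    congr 1
    rw [List.drop_eq_getElem_cons hk, hK]
    congr 1
    conv_lhs => rw [← List.take_append_drop ((m : ℕ)-(k : ℕ)-1) (l.drop ((k : ℕ)+1))]
    congr 1
    rw [List.drop_drop]
    have harith : (k : ℕ) + 1 + ((m : ℕ) - (k : ℕ) - 1) = (m : ℕ) := by omega
    rw [harith, List.drop_eq_getElem_cons hm, hM]
  · intro p hp
    rw [List.mem_iff_getElem] at hp
    obtain ⟨i, hi, hpi⟩ := hp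
    have hi' : i < (m : ℕ) - (k : ℕ) - 1 := by
      have := hi
      simp [List.length_take, List.length_drop] at this
      omega
    have hidx : (k : ℕ) + 1 + i < l.length := by omega
    have hpval : p = l[(k : ℕ)+1+i]'hidx := by
      rw [← hpi]
      rw [List.getElem_take, List.getElem_drop]
    have hfin : ((k : ℕ)+1+i) < (l.map Sigma.fst).length := by omega
    have := hE ⟨(k : ℕ)+1+i, hfin⟩ (by simp; omega) (by simp; omega)
    rw [hgk, hK] at this
    have hgp : (l.map Sigma.fst).get ⟨(k : ℕ)+1+i, hfin⟩ = (l[(k : ℕ)+1+i]'hidx).1 := by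
      simp [List.get_eq_getElem]
    rw [hgp] at this
    rw [hpval]
    exact this

end Aux3
section Aux4
variable {V : Type*} (E : V → V → Prop) {G : V → Type*} [∀ v, Group (G v)]

lemma exists_word (s : GraphProduct E G) : ∃ l : List (Σ v, G v), wordProd E l = s := by
  obtain ⟨x, rfl⟩ := QuotientGroup.mk_surjective s
  induction x using Monoid.CoprodI.induction_on with
  | one => exact ⟨[], rfl⟩
  | of i x => exact ⟨[⟨i, x⟩], by simp [wordProd, GraphProduct.of]; exact mul_one _⟩
  | mul x y hx hy =>
    obtain ⟨lx, hlx⟩ := hx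
    obtain ⟨ly, hly⟩ := hy
    exact ⟨lx ++ ly, by rw [wordProd_append, hlx, hly]; rfl⟩

lemma exists_greduced_of_length (hsymm : Symmetric E) :
    ∀ (n : ℕ) (l : List (Σ v, G v)), l.length ≤ n →
      ∃ l' : List (Σ v, G v), GReduced E l' ∧ wordProd E l' = wordProd E l := by
  intro n
  induction n with
  | zero =>
    intro l hl
    have : l = [] := List.length_eq_zero_iff.1 (Nat.le_zero.1 hl)
    exact ⟨[], ⟨by simp, fun k m h1 h2 => absurd k.2 (by simp)⟩, by rw [this]⟩
  | succ n ih =>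
    intro l hl
    by_cases htriv : ∃ p ∈ l, p.2 = 1
    · obtain ⟨p, hp, hp1⟩ := htriv
      obtain ⟨l₁, l₂, rfl⟩ := List.append_of_mem hp
      have hlen : (l₁ ++ l₂).length ≤ n := by
        simp at hl ⊢; omega
      obtain ⟨l', h1, h2⟩ := ih (l₁ ++ l₂) hlen
      refine ⟨l', h1, ?_⟩
      rw [h2, wordProd_append, wordProd_append, wordProd_cons, hp1,
        GraphProduct.of_one, one_mul]
    · push_neg at htriv
      by_cases hred : VReduced E (l.map Sigma.fst)
      · exact ⟨l, ⟨htriv, hred⟩, rfl⟩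
      · obtain ⟨v, g, g', l₁, l₂, l₃, rfl, hl₂⟩ := exists_decomp E l hred
        have hlen : (l₁ ++ ⟨v, g * g'⟩ :: (l₂ ++ l₃)).length ≤ n := by
          simp at hl ⊢; omega
        obtain ⟨l', h1, h2⟩ := ih _ hlen
        exact ⟨l', h1, by rw [h2, ← wordProd_reduce E hsymm g g' l₁ l₂ l₃ hl₂]⟩

lemma exists_greduced (hsymm : Symmetric E) (s : GraphProduct E G) :
    ∃ l : List (Σ v, G v), GReduced E l ∧ wordProd E l = s := by
  obtain ⟨l, rfl⟩ := exists_word E s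
  exact exists_greduced_of_length E hsymm l.length l le_rfl

end Aux4
section Aux5

lemma norm_alpha_eq {A : Type*} [CStarAlgebra A] (φ : A ≃ₐ[ℂ] A)
    (h : ∀ a, φ (star a) = star (φ a)) (a : A) : ‖φ a‖ = ‖a‖ :=
  StarAlgEquiv.norm_map ({ φ with map_star' := h, map_smul' := map_smul φ } : A ≃⋆ₐ[ℂ] A) a

lemma list_prod_mem_Icc (L : List ℝ) (h : ∀ x ∈ L, 0 ≤ x ∧ x ≤ 1) :
    0 ≤ L.prod ∧ L.prod ≤ 1 := by
  induction L with
  | nil => simp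
  | cons x L ih =>
    obtain ⟨h1, h2⟩ := ih (fun y hy => h y (List.mem_cons_of_mem _ hy))
    obtain ⟨hx1, hx2⟩ := h x List.mem_cons_self
    simp only [List.prod_cons]
    constructor
    · positivity
    · nlinarith

lemma list_prod_le_pow (c : ℝ) (hc : 0 ≤ c) (L : List ℝ)
    (h : ∀ x ∈ L, 0 ≤ x ∧ x ≤ c) : L.prod ≤ c ^ L.length := by
  induction L with
  | nil => simp
  | cons x L ih =>
    obtain ⟨hx1, hx2⟩ := h x List.mem_cons_self
    have ih' := ih (fun y hy => h y (List.mem_cons_of_mem _ hy))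
    have hnn : 0 ≤ L.prod := List.prod_nonneg (fun y hy => (h y (List.mem_cons_of_mem _ hy)).1)
    simp only [List.prod_cons, List.length_cons, pow_succ]
    calc x * L.prod ≤ c * c ^ L.length := by
          apply mul_le_mul hx2 ih' hnn hc
      _ = c ^ L.length * c := mul_comm _ _

lemma list_prod_le_factor (L₁ L₂ : List ℝ) (x : ℝ)
    (h : ∀ y ∈ L₁ ++ x :: L₂, 0 ≤ y ∧ y ≤ 1) :
    (L₁ ++ x :: L₂).prod ≤ x := by
  have h1 := list_prod_mem_Icc L₁ (fun y hy => h y (by simp [hy]))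
  have h2 := list_prod_mem_Icc L₂ (fun y hy => h y (by simp [hy]))
  have hx := h x (by simp)
  rw [List.prod_append, List.prod_cons]
  calc L₁.prod * (x * L₂.prod) ≤ 1 * (x * L₂.prod) := by
        apply mul_le_mul_of_nonneg_right h1.2 (mul_nonneg hx.1 h2.1)
    _ = x * L₂.prod := one_mul _
    _ ≤ x * 1 := mul_le_mul_of_nonneg_left h2.2 hx.1
    _ = x := mul_one _

variable {V : Type*} (E : V → V → Prop) {G : V → Type*} [∀ v, Group (G v)]
  {A : Type*} [CStarAlgebra A]

lemma hWord_norm_le (α : GraphProduct E G →* (A ≃ₐ[ℂ] A))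
    (hstar : ∀ (s : GraphProduct E G) (a : A), α s (star a) = star (α s a))
    (hv : ∀ v, G v → A) (l : List (Σ v, G v)) :
    ‖hWord E α hv l‖ ≤ (l.map fun p => ‖hv p.1 p.2‖).prod := by
  induction l with
  | nil =>
    simp only [hWord, List.map_nil, List.prod_nil]
    have h1 : ‖(1:A)‖ * ‖(1:A)‖ = ‖(1:A)‖ := by
      simpa using (CStarRing.norm_star_mul_self (x := (1:A))).symm
    nlinarith [norm_nonneg (1:A)]
  | cons p l ih =>
    simp only [hWord, List.map_cons, List.prod_cons]
    calc ‖α (wordProd E l)⁻¹ (hv p.1 p.2) * hWord E α hv l‖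
        ≤ ‖α (wordProd E l)⁻¹ (hv p.1 p.2)‖ * ‖hWord E α hv l‖ := norm_mul_le _ _
      _ = ‖hv p.1 p.2‖ * ‖hWord E α hv l‖ := by
          rw [norm_alpha_eq (α (wordProd E l)⁻¹) (hstar _)]
      _ ≤ ‖hv p.1 p.2‖ * (l.map fun p => ‖hv p.1 p.2‖).prod := by
          apply mul_le_mul_of_nonneg_left ih (norm_nonneg _)

end Aux5

/-- Vanishing at infinity of graph product multipliers: if `Γ` is finite, each
`h_v` is unital, bounded by `1/2` off the identity, and vanishes at infinity, then
the graph product multiplier `h = ⋆_Γ h_v` satisfies: for every `ε > 0` the set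
`{s : ‖h(s)‖ ≥ ε}` is finite. -/
theorem stmt18
    {V : Type*} (E : V → V → Prop) {G : V → Type*} [∀ v, Group (G v)]
    {A : Type*} [CStarAlgebra A]
    -- `Γ` is a simplicial graph
    (hsymm : Symmetric E) (hirr : ∀ v, ¬ E v v)
    -- the vertex actions and the graph product action
    (αv : ∀ v, G v →* (A ≃ₐ[ℂ] A))
    (α : GraphProduct E G →* (A ≃ₐ[ℂ] A))
    (hα : ∀ (v : V) (g : G v), α (GraphProduct.of E g) = αv v g)
    (hstar : ∀ (s : GraphProduct E G) (a : A), α s (star a) = star (α s a))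
    -- the actions commute according to `Γ`
    (hacomm : ∀ v w, E v w → ∀ (g : G v) (k : G w) (a : A),
      αv v g (αv w k a) = αv w k (αv v g a))
    -- the vertex multipliers: unital positive definite, commuting according to `Γ`
    (hv : ∀ v, G v → A)
    (hpd : ∀ v, IsPDMultiplier (αv v) (hv v))
    (huni : ∀ v, hv v 1 = 1)
    (hmcomm : ∀ v w, E v w → ∀ (g : G v) (b : G w), αv v g (hv w b) = hv w b)
    [Fintype V]
    (hhalf : ∀ (v : V) (s : G v), s ≠ 1 → ‖hv v s‖ ≤ 1 / 2)
    (hC0 : ∀ v : V, ∀ ε : ℝ, 0 < ε → {s : G v | ε ≤ ‖hv v s‖}.Finite)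
    -- `h` is the graph product multiplier `⋆_Γ h_v`
    (h : GraphProduct E G → A)
    (hred : ∀ l : List (Σ v, G v), GReduced E l → h (wordProd E l) = hWord E α hv l)
    (ε : ℝ) (hε : 0 < ε) :
    {s : GraphProduct E G | ε ≤ ‖h s‖}.Finite := by
  obtain ⟨N, hN⟩ := exists_pow_lt_of_lt_one hε (by norm_num : (1/2 : ℝ) < 1)
  set S : Set (Σ v, G v) := {p | ε ≤ ‖hv p.1 p.2‖} with hSdef
  have hS : S.Finite := by
    have hsub : S ⊆ ⋃ v, Sigma.mk v '' {s : G v | ε ≤ ‖hv v s‖} := by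
      intro p hp
      exact Set.mem_iUnion.2 ⟨p.1, ⟨p.2, hp, Sigma.eta p⟩⟩
    exact (Set.finite_iUnion (fun v => (hC0 v ε hε).image _)).subset hsub
  haveI := hS.to_subtype
  have hL : {l : List (Σ v, G v) | (∀ p ∈ l, p ∈ S) ∧ l.length ≤ N}.Finite := by
    apply ((List.finite_length_le (↥S) N).image (List.map (Subtype.val))).subset
    rintro l ⟨hmem, hlen⟩
    refine ⟨l.attach.map (fun x => (⟨x.1, hmem x.1 x.2⟩ : ↥S)), ?_, ?_⟩
    · simpa using hlen
    · simp [List.map_map]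
  apply (hL.image (wordProd E)).subset
  intro s hs
  obtain ⟨l, hgred, rfl⟩ := exists_greduced E hsymm s
  obtain ⟨hne, hvred⟩ := hgred
  simp only [Set.mem_setOf_eq] at hs
  rw [hred l ⟨hne, hvred⟩] at hs
  have hkey : ε ≤ (l.map fun p => ‖hv p.1 p.2‖).prod :=
    le_trans hs (hWord_norm_le E α hstar hv l)
  have hbounds : ∀ x ∈ l.map (fun p => ‖hv p.1 p.2‖), 0 ≤ x ∧ x ≤ 1/2 := by
    intro x hx
    rw [List.mem_map] at hx
    obtain ⟨p, hp, rfl⟩ := hx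
    exact ⟨norm_nonneg _, hhalf p.1 p.2 (hne p hp)⟩
  refine ⟨l, ⟨?_, ?_⟩, rfl⟩
  · intro p hp
    obtain ⟨l₁, l₂, rfl⟩ := List.append_of_mem hp
    have hmapeq : ((l₁ ++ p :: l₂).map fun q => ‖hv q.1 q.2‖) =
        (l₁.map fun q => ‖hv q.1 q.2‖) ++ ‖hv p.1 p.2‖ :: (l₂.map fun q => ‖hv q.1 q.2‖) := by
      simp
    rw [hmapeq] at hkey hbounds
    have := list_prod_le_factor _ _ _ (fun y hy => by
      obtain ⟨hy1, hy2⟩ := hbounds y hy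
      exact ⟨hy1, hy2.trans (by norm_num)⟩)
    exact le_trans hkey this
  · by_contra hlen
    push_neg at hlen
    have h1 : (l.map fun p => ‖hv p.1 p.2‖).prod ≤ (1/2 : ℝ) ^ l.length := by
      have := list_prod_le_pow (1/2 : ℝ) (by norm_num) _ hbounds
      simpa using this
    have h2 : (1/2 : ℝ) ^ l.length ≤ (1/2 : ℝ) ^ N :=
      pow_le_pow_of_le_one (by norm_num) (by norm_num) (le_of_lt hlen)
    linarith
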